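/- For every i ∈ ℤ, CTB_i is differentiable at each knot and its first derivative satisfies: CTB_i'(x_{i−2}) = 0, CTB_i'(x_{i−1}) = (3/4)·csc(3h/2), CTB_i'(x_i) = 0, CTB_i'(x_{i+1}) = −(3/4)·csc(3h/2), and CTB_i'(x_{i+2}) = 0. -/

import Mathlib

/-!
On each of the four knot intervals `CTB_i` is a trigonometric polynomial in the `ω_j` and `φ_j`,
so it is enough to check that adjacent pieces (and the zero function outside `[x_{i-2}, x_{i+2}]`)
have the same value and the same derivative at the common knot. At a knot `x_k` every `ω_j`, `φ_j`
is `±sin((k - j)h/2)`, and `sin h = 2 sin(h/2) cos(h/2)` turns `θ` into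
`2 sin²(h/2) cos(h/2) sin(3h/2)`, which produces the factor `(3/4) csc(3h/2)`.
-/

/-- The knot `x_j = a + j·h` of a uniform partition. -/
noncomputable def knot (h a : ℝ) (j : ℤ) : ℝ := a + (j : ℝ) * h

/-- The cubic trigonometric B-spline `CTB_i` over the uniform knots `x_j = a + j·h`,
built from `ω_j(x) = sin((x − x_j)/2)`, `φ_j(x) = sin((x_j − x)/2)` and
`θ = sin(h/2)·sin(h)·sin(3h/2)`. -/
noncomputable def CTB (h a : ℝ) (i : ℤ) (x : ℝ) : ℝ :=
  let ω : ℤ → ℝ := fun j => Real.sin ((x - knot h a j) / 2)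
  let φ : ℤ → ℝ := fun j => Real.sin ((knot h a j - x) / 2)
  let θ : ℝ := Real.sin (h / 2) * Real.sin h * Real.sin (3 * h / 2)
  if knot h a (i - 2) ≤ x ∧ x ≤ knot h a (i - 1) then
    (ω (i - 2)) ^ 3 / θ
  else if knot h a (i - 1) ≤ x ∧ x ≤ knot h a i then
    (ω (i - 2) * (ω (i - 2) * φ i + φ (i + 1) * ω (i - 1)) + φ (i + 2) * (ω (i - 1)) ^ 2) / θ
  else if knot h a i ≤ x ∧ x ≤ knot h a (i + 1) then
    (ω (i - 2) * (φ (i + 1)) ^ 2 + φ (i + 2) * (ω (i - 1) * φ (i + 1) + φ (i + 2) * ω i)) / θ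
  else if knot h a (i + 1) ≤ x ∧ x ≤ knot h a (i + 2) then
    (φ (i + 2)) ^ 3 / θ
  else 0

open Set Real

theorem hasDerivAt_of_eqOn_Icc_of_eqOn_Icc {F : Type*} [NormedAddCommGroup F] [NormedSpace ℝ F]
    {f g₁ g₂ : ℝ → F} {f' : F} {l p r : ℝ} (hl : l < p) (hr : p < r)
    (h₁ : HasDerivAt g₁ f' p) (h₂ : HasDerivAt g₂ f' p)
    (e₁ : EqOn f g₁ (Icc l p)) (e₂ : EqOn f g₂ (Icc p r)) :
    HasDerivAt f f' p := by
  have hleft : HasDerivWithinAt f f' (Iic p) p :=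
    (h₁.hasDerivWithinAt.congr e₁ (e₁ ⟨hl.le, le_rfl⟩)).mono_of_mem_nhdsWithin
      (Icc_mem_nhdsLE hl)
  have hright : HasDerivWithinAt f f' (Ici p) p :=
    (h₂.hasDerivWithinAt.congr e₂ (e₂ ⟨le_rfl, hr.le⟩)).mono_of_mem_nhdsWithin
      (Icc_mem_nhdsGE hr)
  simpa [Iic_union_Ici] using hleft.union hright

theorem knot_strictMono {h : ℝ} (hh : 0 < h) (a : ℝ) : StrictMono (knot h a) := by
  intro j k hjk
  unfold knot
  gcongr

theorem half_knot_sub_knot (h a : ℝ) (m j : ℤ) :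
    (knot h a m - knot h a j) / 2 = ((m - j : ℤ) : ℝ) * (h / 2) := by
  simp only [knot]
  push_cast
  ring

noncomputable section

namespace CTB

variable (h a : ℝ) (i : ℤ)

def ω (j : ℤ) (x : ℝ) : ℝ := sin ((x - knot h a j) / 2)

def φ (j : ℤ) (x : ℝ) : ℝ := sin ((knot h a j - x) / 2)

def θ : ℝ := sin (h / 2) * sin h * sin (3 * h / 2)

def piece₁ (x : ℝ) : ℝ := ω h a (i - 2) x ^ 3 / θ h

def piece₂ (x : ℝ) : ℝ :=
  (ω h a (i - 2) x * (ω h a (i - 2) x * φ h a i x + φ h a (i + 1) x * ω h a (i - 1) x) +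
    φ h a (i + 2) x * ω h a (i - 1) x ^ 2) / θ h

def piece₃ (x : ℝ) : ℝ :=
  (ω h a (i - 2) x * φ h a (i + 1) x ^ 2 +
    φ h a (i + 2) x * (ω h a (i - 1) x * φ h a (i + 1) x + φ h a (i + 2) x * ω h a i x)) / θ h

def piece₄ (x : ℝ) : ℝ := φ h a (i + 2) x ^ 3 / θ h

theorem hasDerivAt_ω (j : ℤ) (x : ℝ) :
    HasDerivAt (ω h a j) (cos ((x - knot h a j) / 2) / 2) x :=
  (((hasDerivAt_id' x).sub_const _).div_const 2).sin.congr_deriv (by ring)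

theorem hasDerivAt_φ (j : ℤ) (x : ℝ) :
    HasDerivAt (φ h a j) (-(cos ((knot h a j - x) / 2) / 2)) x :=
  (((hasDerivAt_id' x).const_sub _).div_const 2).sin.congr_deriv (by ring)

theorem θ_eq : θ h = 2 * sin (h / 2) ^ 2 * cos (h / 2) * sin (3 * (h / 2)) := by
  rw [θ, ← mul_div_assoc, show h = 2 * (h / 2) by ring, sin_two_mul]
  ring_nf

theorem hasDerivAt_piece₁ (hs : sin (h / 2) ≠ 0) (hc : cos (h / 2) ≠ 0) :
    HasDerivAt (piece₁ h a i) 0 (knot h a (i - 2)) ∧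
    HasDerivAt (piece₁ h a i) (3 / 4 * (sin (3 * h / 2))⁻¹) (knot h a (i - 1)) := by
  have hd (x : ℝ) := ((hasDerivAt_ω h a (i - 2) x).pow 3).div_const (θ h)
  constructor
  · refine (hd _).congr_deriv ?_
    simp [ω]
  · refine (hd _).congr_deriv ?_
    simp [half_knot_sub_knot, θ_eq, mul_div_assoc, ω]
    field_simp
    ring

theorem hasDerivAt_piece₂ (hs : sin (h / 2) ≠ 0) (hc : cos (h / 2) ≠ 0) :
    HasDerivAt (piece₂ h a i) (3 / 4 * (sin (3 * h / 2))⁻¹) (knot h a (i - 1)) ∧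
    HasDerivAt (piece₂ h a i) 0 (knot h a i) := by
  have hd (x : ℝ) := (((hasDerivAt_ω h a (i - 2) x).mul
      (((hasDerivAt_ω h a (i - 2) x).mul (hasDerivAt_φ h a i x)).add
        ((hasDerivAt_φ h a (i + 1) x).mul (hasDerivAt_ω h a (i - 1) x)))).add
      ((hasDerivAt_φ h a (i + 2) x).mul ((hasDerivAt_ω h a (i - 1) x).pow 2))).div_const (θ h)
  constructor
  · refine (hd _).congr_deriv ?_
    simp [half_knot_sub_knot, θ_eq, mul_div_assoc, ω, φ, sin_two_mul]
    field_simp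
    ring
  · refine (hd _).congr_deriv ?_
    simp [half_knot_sub_knot, ω, φ, sin_two_mul]
    left
    ring

theorem hasDerivAt_piece₃ (hs : sin (h / 2) ≠ 0) (hc : cos (h / 2) ≠ 0) :
    HasDerivAt (piece₃ h a i) 0 (knot h a i) ∧
    HasDerivAt (piece₃ h a i) (-(3 / 4) * (sin (3 * h / 2))⁻¹) (knot h a (i + 1)) := by
  have hd (x : ℝ) :=
    (((hasDerivAt_ω h a (i - 2) x).mul ((hasDerivAt_φ h a (i + 1) x).pow 2)).add
      ((hasDerivAt_φ h a (i + 2) x).mul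
        (((hasDerivAt_ω h a (i - 1) x).mul (hasDerivAt_φ h a (i + 1) x)).add
          ((hasDerivAt_φ h a (i + 2) x).mul (hasDerivAt_ω h a i x))))).div_const (θ h)
  constructor
  · refine (hd _).congr_deriv ?_
    simp [half_knot_sub_knot, ω, φ, sin_two_mul]
    left
    ring
  · refine (hd _).congr_deriv ?_
    simp [half_knot_sub_knot, θ_eq, mul_div_assoc, ω, φ, sin_two_mul]
    field_simp
    ring

theorem hasDerivAt_piece₄ (hs : sin (h / 2) ≠ 0) (hc : cos (h / 2) ≠ 0) :
    HasDerivAt (piece₄ h a i) (-(3 / 4) * (sin (3 * h / 2))⁻¹) (knot h a (i + 1)) ∧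
    HasDerivAt (piece₄ h a i) 0 (knot h a (i + 2)) := by
  have hd (x : ℝ) := ((hasDerivAt_φ h a (i + 2) x).pow 3).div_const (θ h)
  constructor
  · refine (hd _).congr_deriv ?_
    simp [half_knot_sub_knot, θ_eq, mul_div_assoc, φ]
    field_simp
    ring
  · refine (hd _).congr_deriv ?_
    simp [φ]

theorem eqOn_piece₁ :
    EqOn (CTB h a i) (piece₁ h a i) (Icc (knot h a (i - 2)) (knot h a (i - 1))) :=
  fun x hx => by simp [CTB, piece₁, ω, θ, hx.1, hx.2]

variable {h}

theorem eqOn_zero_Iic (hh : 0 < h) : EqOn (CTB h a i) 0 (Iic (knot h a (i - 2))) := by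
  intro x (hx : x ≤ knot h a (i - 2))
  rcases hx.eq_or_lt with rfl | hlt
  · simp [CTB, (knot_strictMono hh a).monotone (by omega : i - 2 ≤ i - 1)]
  · have hk (k : ℤ) (hk : i - 2 ≤ k) : ¬ knot h a k ≤ x :=
      (hlt.trans_le ((knot_strictMono hh a).monotone hk)).not_ge
    simp [CTB, hk (i - 2) le_rfl, hk (i - 1) (by omega), hk i (by omega), hk (i + 1) (by omega)]

theorem eqOn_zero_Ici (hh : 0 < h) : EqOn (CTB h a i) 0 (Ici (knot h a (i + 2))) := by
  intro x (hx : knot h a (i + 2) ≤ x)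
  have hk (k : ℤ) (hk : k < i + 2) : ¬ x ≤ knot h a k :=
    (((knot_strictMono hh a) hk).trans_le hx).not_ge
  rcases hx.eq_or_lt with rfl | hlt
  · simp [CTB, hk (i - 1) (by omega), hk i (by omega), hk (i + 1) (by omega),
      (knot_strictMono hh a).monotone (by omega : i + 1 ≤ i + 2)]
  · simp [CTB, hk (i - 1) (by omega), hk i (by omega), hk (i + 1) (by omega), hlt.not_ge]

theorem eqOn_piece₂ (hh : 0 < h) :
    EqOn (CTB h a i) (piece₂ h a i) (Icc (knot h a (i - 1)) (knot h a i)) := by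
  intro x hx
  rcases hx.1.eq_or_lt with rfl | hlt
  · rw [eqOn_piece₁ h a i ⟨(knot_strictMono hh a).monotone (by omega), le_rfl⟩]
    simp [piece₁, piece₂, ω, φ, half_knot_sub_knot]
    ring
  · simp [CTB, piece₂, ω, φ, θ, hlt.not_ge, hlt.le, hx.2]

theorem eqOn_piece₃ (hh : 0 < h) :
    EqOn (CTB h a i) (piece₃ h a i) (Icc (knot h a i) (knot h a (i + 1))) := by
  intro x hx
  rcases hx.1.eq_or_lt with rfl | hlt
  · rw [eqOn_piece₂ a i hh ⟨(knot_strictMono hh a).monotone (by omega), le_rfl⟩]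
    simp [piece₂, piece₃, ω, φ, half_knot_sub_knot]
    ring
  · have hk : ¬ x ≤ knot h a (i - 1) := (((knot_strictMono hh a) (by omega)).trans hlt).not_ge
    simp [CTB, piece₃, ω, φ, θ, hk, hlt.not_ge, hlt.le, hx.2]

theorem eqOn_piece₄ (hh : 0 < h) :
    EqOn (CTB h a i) (piece₄ h a i) (Icc (knot h a (i + 1)) (knot h a (i + 2))) := by
  intro x hx
  rcases hx.1.eq_or_lt with rfl | hlt
  · rw [eqOn_piece₃ a i hh ⟨(knot_strictMono hh a).monotone (by omega), le_rfl⟩]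
    simp [piece₃, piece₄, ω, φ, half_knot_sub_knot]
    ring
  · have hk (k : ℤ) (hk : k < i + 1) : ¬ x ≤ knot h a k :=
      (((knot_strictMono hh a) hk).trans hlt).not_ge
    simp [CTB, piece₄, φ, θ, hk (i - 1) (by omega), hk i (by omega), hlt.not_ge, hlt.le, hx.2]

end CTB

end

theorem CTB_deriv_at_knots (h a : ℝ) (hh : 0 < h) (hh' : h < 2 * Real.pi / 3) (i : ℤ) :
    HasDerivAt (CTB h a i) 0 (knot h a (i - 2)) ∧
    HasDerivAt (CTB h a i) (3 / 4 * (Real.sin (3 * h / 2))⁻¹) (knot h a (i - 1)) ∧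
    HasDerivAt (CTB h a i) 0 (knot h a i) ∧
    HasDerivAt (CTB h a i) (-(3 / 4) * (Real.sin (3 * h / 2))⁻¹) (knot h a (i + 1)) ∧
    HasDerivAt (CTB h a i) 0 (knot h a (i + 2)) := by
  have hπ := pi_pos
  have hs : sin (h / 2) ≠ 0 := (sin_pos_of_pos_of_lt_pi (by positivity) (by linarith)).ne'
  have hc : cos (h / 2) ≠ 0 := (cos_pos_of_mem_Ioo ⟨by linarith, by linarith⟩).ne'
  have hlt {j k : ℤ} (hjk : j < k) : knot h a j < knot h a k := knot_strictMono hh a hjk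
  obtain ⟨d₁, d₁'⟩ := CTB.hasDerivAt_piece₁ h a i hs hc
  obtain ⟨d₂, d₂'⟩ := CTB.hasDerivAt_piece₂ h a i hs hc
  obtain ⟨d₃, d₃'⟩ := CTB.hasDerivAt_piece₃ h a i hs hc
  obtain ⟨d₄, d₄'⟩ := CTB.hasDerivAt_piece₄ h a i hs hc
  refine ⟨?_, ?_, ?_, ?_, ?_⟩
  · exact hasDerivAt_of_eqOn_Icc_of_eqOn_Icc (sub_one_lt _) (hlt (by omega)) (hasDerivAt_const _ 0)
      d₁ ((CTB.eqOn_zero_Iic a i hh).mono Icc_subset_Iic_self) (CTB.eqOn_piece₁ h a i)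
  · exact hasDerivAt_of_eqOn_Icc_of_eqOn_Icc (hlt (by omega)) (hlt (by omega)) d₁' d₂
      (CTB.eqOn_piece₁ h a i) (CTB.eqOn_piece₂ a i hh)
  · exact hasDerivAt_of_eqOn_Icc_of_eqOn_Icc (hlt (by omega)) (hlt (by omega)) d₂' d₃
      (CTB.eqOn_piece₂ a i hh) (CTB.eqOn_piece₃ a i hh)
  · exact hasDerivAt_of_eqOn_Icc_of_eqOn_Icc (hlt (by omega)) (hlt (by omega)) d₃' d₄
      (CTB.eqOn_piece₃ a i hh) (CTB.eqOn_piece₄ a i hh)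
  · exact hasDerivAt_of_eqOn_Icc_of_eqOn_Icc (hlt (by omega)) (lt_add_one _) d₄'
      (hasDerivAt_const _ 0) (CTB.eqOn_piece₄ a i hh)
      ((CTB.eqOn_zero_Ici a i hh).mono Icc_subset_Ici_self)
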